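/- arXiv:0901.1368 — 6 statements merged into one kernel-verified Lean document; each statement's English description precedes it below -/
import Mathlib

section
/- If ω : [0,∞) → [0,∞) is concave with ω(0) = 0, and f : ℝⁿ → ℝ satisfies |f(x) − f(y)| ≤ ω(|x − y|) for all x, y, then for a function K(x) = S(x/|x|)/|x|^{n−1+α} with S continuous on the sphere and mean zero, the truncated integral |∫_{|x−t|≤2ξ} K(x−t) f(t) dt| ≤ C ∫₀^{2ξ} ω(r)/r^α dr, where C depends only on the sup norm of S and n. -/
/-!
In polar coordinates `s = r • θ` an additive Haar measure splits as
`μ.toSphere ⊗ r ^ (n - 1) dr`, so the kernel `K s = S (s / ‖s‖) / ‖s‖ ^ (n - 1 + α)`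
integrates to `(∫ S) * (∫₀ᴿ r ^ (-α) dr) = 0` over every ball `‖s‖ ≤ R`. After substituting
`s = x - t`, the integral of `K s * f (x - s)` is therefore unchanged when `f (x - s)` is
replaced by `f (x - s) - f x`, which is bounded by `ω ‖s‖`. With `|S| ≤ M` the integrand is
dominated by the radial function `M * ω ‖s‖ / ‖s‖ ^ (n - 1 + α)`, whose integral over the ball
is `n * |B₁| * M * ∫₀ᴿ ω r / r ^ α dr`.
-/

open MeasureTheory Set Metric

theorem pow_sub_one_mul_div_rpow {d : ℕ} (hd : 1 ≤ d) (α c : ℝ) {t : ℝ} (ht : 0 < t) :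
    t ^ (d - 1) * (c / t ^ ((d : ℝ) - 1 + α)) = c / t ^ α := by
  rw [Real.rpow_add ht, ← Nat.cast_pred hd, Real.rpow_natCast]
  field_simp

namespace MeasureTheory

theorem integral_volumeIoiPow (m : ℕ) (h : ℝ → ℝ) :
    ∫ r, h r ∂Measure.volumeIoiPow m = ∫ y in Ioi (0 : ℝ), y ^ m * h y := by
  simp only [Measure.volumeIoiPow, ENNReal.ofReal]
  rw [integral_withDensity_eq_integral_smul
      (measurable_subtype_coe.pow_const _).real_toNNReal,
    integral_subtype_comap measurableSet_Ioi fun y ↦ Real.toNNReal (y ^ m) • h y]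
  refine setIntegral_congr_fun measurableSet_Ioi fun y hy ↦ ?_
  rw [NNReal.smul_def, Real.coe_toNNReal _ (pow_nonneg hy.out.le _), smul_eq_mul]

theorem integrable_volumeIoiPow_iff (m : ℕ) {h : ℝ → ℝ} :
    Integrable (fun r : Ioi (0 : ℝ) ↦ h r) (Measure.volumeIoiPow m) ↔
      IntegrableOn (fun y ↦ y ^ m * h y) (Ioi 0) := by
  rw [Measure.volumeIoiPow, integrable_withDensity_iff
      (measurable_subtype_coe.pow_const m).ennreal_ofReal
      (ae_of_all _ fun _ ↦ ENNReal.ofReal_lt_top),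
    integrableOn_iff_comap_subtypeVal measurableSet_Ioi]
  refine integrable_congr (ae_of_all _ fun r ↦ ?_)
  simp only [Function.comp_apply]
  rw [ENNReal.toReal_ofReal (pow_nonneg r.2.out.le m), mul_comm]

theorem indicator_closedBall_mul_fun_norm {E : Type*} [NormedAddCommGroup E]
    [NormedSpace ℝ E] (S : E → ℝ) (h : ℝ → ℝ) (R : ℝ) :
    (closedBall (0 : E) R).indicator (fun x ↦ S (‖x‖⁻¹ • x) * h ‖x‖) =
      fun x ↦ S (‖x‖⁻¹ • x) * (Iic R).indicator h ‖x‖ := by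
  ext x
  simp only [indicator, mem_closedBall_zero_iff, mem_Iic]
  split_ifs <;> simp

theorem pow_mul_indicator_Iic (m : ℕ) (h : ℝ → ℝ) (R : ℝ) :
    (fun y : ℝ ↦ y ^ m * (Iic R).indicator h y) = (Iic R).indicator fun y ↦ y ^ m * h y :=
  funext fun _ ↦ (indicator_mul_right (Iic R) (· ^ m) h).symm

theorem indicator_closedBall_comp_sub_left {E F : Type*} [SeminormedAddCommGroup E] [Zero F]
    (g : E → F) (x : E) (R : ℝ) :
    (fun s ↦ (closedBall x R).indicator g (x - s)) =
      (closedBall (0 : E) R).indicator fun s ↦ g (x - s) := by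
  ext s
  simp [indicator, dist_eq_norm]

section Translation

variable {E : Type*} [NormedAddCommGroup E] [NormedSpace ℝ E] [MeasurableSpace E] [BorelSpace E]
  [FiniteDimensional ℝ E] (μ : Measure E) [μ.IsAddHaarMeasure]

theorem setIntegral_closedBall_comp_sub_left (g : E → ℝ) (x : E) (R : ℝ) :
    ∫ t in closedBall x R, g t ∂μ = ∫ s in closedBall (0 : E) R, g (x - s) ∂μ := by
  rw [← integral_indicator measurableSet_closedBall, ← integral_sub_left_eq_self _ μ x,
    indicator_closedBall_comp_sub_left, integral_indicator measurableSet_closedBall]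

theorem IntegrableOn.comp_sub_left_closedBall {g : E → ℝ} {x : E} {R : ℝ}
    (hg : IntegrableOn g (closedBall x R) μ) :
    IntegrableOn (fun s ↦ g (x - s)) (closedBall (0 : E) R) μ := by
  rw [← integrable_indicator_iff measurableSet_closedBall, ← indicator_closedBall_comp_sub_left]
  exact ((integrable_indicator_iff measurableSet_closedBall).2 hg).comp_sub_left x

end Translation

section Polar

variable {E : Type*} [NormedAddCommGroup E] [NormedSpace ℝ E] [MeasurableSpace E] [BorelSpace E]
  [FiniteDimensional ℝ E] [Nontrivial E] (μ : Measure E) [μ.IsAddHaarMeasure]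

theorem integral_mul_fun_norm_addHaar (S : E → ℝ) (h : ℝ → ℝ) :
    ∫ x, S (‖x‖⁻¹ • x) * h ‖x‖ ∂μ =
      (∫ θ : sphere (0 : E) 1, S θ ∂μ.toSphere) *
        ∫ y in Ioi (0 : ℝ), y ^ (Module.finrank ℝ E - 1) * h y :=
  calc ∫ x, S (‖x‖⁻¹ • x) * h ‖x‖ ∂μ
      = ∫ x : ({0}ᶜ : Set E), S (‖x.1‖⁻¹ • x.1) * h ‖x.1‖ ∂μ.comap (↑) := by
        rw [integral_subtype_comap (measurableSet_singleton _).compl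
          fun x ↦ S (‖x‖⁻¹ • x) * h ‖x‖, restrict_compl_singleton]
    _ = ∫ p, S p.1 * h p.2 ∂μ.toSphere.prod (.volumeIoiPow (Module.finrank ℝ E - 1)) := by
        simpa using μ.measurePreserving_homeomorphUnitSphereProd.integral_comp
          (Homeomorph.measurableEmbedding _) fun p ↦ S p.1 * h p.2
    _ = _ := by
        rw [integral_prod_mul (fun θ : sphere (0 : E) 1 ↦ S θ) fun r : Ioi (0 : ℝ) ↦ h r,
          integral_volumeIoiPow]

theorem integrable_mul_fun_norm_addHaar {S : E → ℝ} {h : ℝ → ℝ}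
    (hS : Integrable (fun θ : sphere (0 : E) 1 ↦ S θ) μ.toSphere)
    (hh : IntegrableOn (fun y ↦ y ^ (Module.finrank ℝ E - 1) * h y) (Ioi 0)) :
    Integrable (fun x ↦ S (‖x‖⁻¹ • x) * h ‖x‖) μ := by
  have := μ.measurePreserving_homeomorphUnitSphereProd.integrable_comp_emb
    (g := fun p ↦ S p.1 * h p.2) (Homeomorph.measurableEmbedding _)
  simp only [Function.comp_def, homeomorphUnitSphereProd_apply_fst_coe,
    homeomorphUnitSphereProd_apply_snd_coe] at this
  rw [← restrict_compl_singleton (μ := μ) 0, ← IntegrableOn,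
    integrableOn_iff_comap_subtypeVal (measurableSet_singleton _).compl, Function.comp_def,
    this]
  exact hS.mul_prod ((integrable_volumeIoiPow_iff _).2 hh)

theorem setIntegral_closedBall_mul_fun_norm_addHaar (S : E → ℝ) (h : ℝ → ℝ) (R : ℝ) :
    ∫ x in closedBall (0 : E) R, S (‖x‖⁻¹ • x) * h ‖x‖ ∂μ =
      (∫ θ : sphere (0 : E) 1, S θ ∂μ.toSphere) *
        ∫ y in Ioc 0 R, y ^ (Module.finrank ℝ E - 1) * h y := by
  rw [← integral_indicator measurableSet_closedBall, indicator_closedBall_mul_fun_norm,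
    integral_mul_fun_norm_addHaar, pow_mul_indicator_Iic, setIntegral_indicator measurableSet_Iic,
    Ioi_inter_Iic]

theorem integrableOn_closedBall_mul_fun_norm_addHaar {S : E → ℝ} {h : ℝ → ℝ} {R : ℝ}
    (hS : Integrable (fun θ : sphere (0 : E) 1 ↦ S θ) μ.toSphere)
    (hh : IntegrableOn (fun y ↦ y ^ (Module.finrank ℝ E - 1) * h y) (Ioc 0 R)) :
    IntegrableOn (fun x ↦ S (‖x‖⁻¹ • x) * h ‖x‖) (closedBall (0 : E) R) μ := by
  rw [← integrable_indicator_iff measurableSet_closedBall, indicator_closedBall_mul_fun_norm]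
  refine integrable_mul_fun_norm_addHaar μ hS ?_
  rwa [pow_mul_indicator_Iic, integrableOn_indicator_iff measurableSet_Iic, Iic_inter_Ioi]

theorem setIntegral_closedBall_fun_norm_addHaar (φ : ℝ → ℝ) (R : ℝ) :
    ∫ x in closedBall (0 : E) R, φ ‖x‖ ∂μ =
      Module.finrank ℝ E * μ.real (ball 0 1) *
        ∫ y in Ioc 0 R, y ^ (Module.finrank ℝ E - 1) * φ y := by
  simpa [μ.toSphere_real_apply_univ] using
    setIntegral_closedBall_mul_fun_norm_addHaar μ (fun _ ↦ 1) φ R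

theorem integrableOn_closedBall_fun_norm_addHaar {φ : ℝ → ℝ} {R : ℝ}
    (hφ : IntegrableOn (fun y ↦ y ^ (Module.finrank ℝ E - 1) * φ y) (Ioc 0 R)) :
    IntegrableOn (fun x ↦ φ ‖x‖) (closedBall (0 : E) R) μ := by
  simpa using
    integrableOn_closedBall_mul_fun_norm_addHaar μ (S := fun _ ↦ 1) (integrable_const 1) hφ

end Polar

end MeasureTheory

noncomputable def sphericalKernel {E : Type*} [NormedAddCommGroup E] [NormedSpace ℝ E]
    (S : E → ℝ) (β : ℝ) (s : E) : ℝ :=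
  S (‖s‖⁻¹ • s) / ‖s‖ ^ β

section SphericalKernel

variable {E : Type*} [NormedAddCommGroup E] [NormedSpace ℝ E] [Nontrivial E]

theorem abs_sphericalKernel_mul_sub_le {S : E → ℝ} {M : ℝ}
    (hM : ∀ θ ∈ sphere (0 : E) 1, |S θ| ≤ M) {ω : ℝ → ℝ} {f : E → ℝ}
    (hf : ∀ x y, |f x - f y| ≤ ω ‖x - y‖) (β : ℝ) (x s : E) :
    |sphericalKernel S β s * (f (x - s) - f x)| ≤ M * (ω ‖s‖ / ‖s‖ ^ β) := by
  have hfs : |f (x - s) - f x| ≤ ω ‖s‖ := by simpa using hf (x - s) x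
  obtain ⟨θ, hθ⟩ := (NormedSpace.sphere_nonempty (x := (0 : E))).2 zero_le_one
  have hM0 : 0 ≤ M := (abs_nonneg _).trans (hM θ hθ)
  rcases eq_or_ne s 0 with rfl | hs
  · have hω0 : 0 ≤ ω ‖(0 : E)‖ := (abs_nonneg _).trans hfs
    simp only [sub_zero, sub_self, mul_zero, abs_zero]
    positivity
  · have hs₁ : ‖s‖⁻¹ • s ∈ sphere (0 : E) 1 := by simp [norm_smul, hs]
    have hpow : 0 < ‖s‖ ^ β := Real.rpow_pos_of_pos (norm_pos_iff.2 hs) β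
    calc |sphericalKernel S β s * (f (x - s) - f x)|
        = |S (‖s‖⁻¹ • s)| * |f (x - s) - f x| / ‖s‖ ^ β := by
          rw [sphericalKernel, abs_mul, abs_div, abs_of_pos hpow, div_mul_eq_mul_div]
      _ ≤ M * ω ‖s‖ / ‖s‖ ^ β := by gcongr; exact hM _ hs₁
      _ = M * (ω ‖s‖ / ‖s‖ ^ β) := mul_div_assoc _ _ _

variable [MeasurableSpace E] [BorelSpace E] [FiniteDimensional ℝ E] (μ : Measure E)
  [μ.IsAddHaarMeasure]

theorem setIntegral_closedBall_sphericalKernel_eq_zero {S : E → ℝ}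
    (hS : ∫ θ : sphere (0 : E) 1, S θ ∂μ.toSphere = 0) (β R : ℝ) :
    ∫ s in closedBall (0 : E) R, sphericalKernel S β s ∂μ = 0 := by
  simp only [sphericalKernel, div_eq_mul_inv]
  rw [setIntegral_closedBall_mul_fun_norm_addHaar μ S (fun r ↦ (r ^ β)⁻¹), hS, zero_mul]

theorem integrableOn_closedBall_sphericalKernel {S : E → ℝ}
    (hS : Integrable (fun θ : sphere (0 : E) 1 ↦ S θ) μ.toSphere) {α : ℝ} (hα : α < 1)
    (R : ℝ) :
    IntegrableOn (sphericalKernel S ((Module.finrank ℝ E : ℝ) - 1 + α))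
      (closedBall (0 : E) R) μ := by
  unfold sphericalKernel
  simp only [div_eq_mul_inv]
  refine integrableOn_closedBall_mul_fun_norm_addHaar (h := fun r ↦ (r ^ _)⁻¹) μ hS ?_
  have hrpow : IntegrableOn (fun y : ℝ ↦ y ^ (-α)) (Ioc 0 R) :=
    (intervalIntegral.intervalIntegrable_rpow' (by linarith)).1.mono_set Ioc_subset_uIoc
  refine hrpow.congr_fun (fun y hy ↦ ?_) measurableSet_Ioc
  rw [← one_div, pow_sub_one_mul_div_rpow Module.finrank_pos α 1 hy.1, one_div]
  exact Real.rpow_neg hy.1.le α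

theorem abs_setIntegral_closedBall_sphericalKernel_mul_le {S : E → ℝ}
    (hS : Integrable (fun θ : sphere (0 : E) 1 ↦ S θ) μ.toSphere) {M : ℝ}
    (hM : ∀ θ ∈ sphere (0 : E) 1, |S θ| ≤ M)
    (hSmean : ∫ θ : sphere (0 : E) 1, S θ ∂μ.toSphere = 0) {α : ℝ} (hα : α < 1)
    {ω : ℝ → ℝ} {f : E → ℝ} (hf : ∀ x y, |f x - f y| ≤ ω ‖x - y‖) (x : E) (R : ℝ)
    (hint : IntegrableOn
      (fun t ↦ sphericalKernel S ((Module.finrank ℝ E : ℝ) - 1 + α) (x - t) * f t)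
      (closedBall x R) μ)
    (hω : IntegrableOn (fun r ↦ ω r / r ^ α) (Ioc 0 R)) :
    |∫ t in closedBall x R,
        sphericalKernel S ((Module.finrank ℝ E : ℝ) - 1 + α) (x - t) * f t ∂μ| ≤
      Module.finrank ℝ E * μ.real (ball 0 1) * M * ∫ r in Ioc 0 R, ω r / r ^ α := by
  set d := Module.finrank ℝ E
  set K := sphericalKernel S ((d : ℝ) - 1 + α)
  have hK : IntegrableOn K (closedBall 0 R) μ :=
    integrableOn_closedBall_sphericalKernel μ hS hα R
  have hKsub : IntegrableOn (fun s ↦ K s * (f (x - s) - f x)) (closedBall 0 R) μ := by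
    have hKf := hint.comp_sub_left_closedBall μ
    simp only [sub_sub_cancel] at hKf
    exact (hKf.sub (hK.mul_const (f x))).congr_fun (fun s _ ↦ (mul_sub _ _ _).symm)
      measurableSet_closedBall
  have hradial : EqOn (fun y ↦ y ^ (d - 1) * (M * (ω y / y ^ ((d : ℝ) - 1 + α))))
      (fun y ↦ M * (ω y / y ^ α)) (Ioc 0 R) := fun y hy ↦ by
    dsimp only
    rw [mul_left_comm, pow_sub_one_mul_div_rpow Module.finrank_pos α _ hy.1]
  have hbound : IntegrableOn (fun s ↦ M * (ω ‖s‖ / ‖s‖ ^ ((d : ℝ) - 1 + α)))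
      (closedBall 0 R) μ :=
    integrableOn_closedBall_fun_norm_addHaar μ
      (IntegrableOn.congr_fun (hω.const_mul M) hradial.symm measurableSet_Ioc)
  calc |∫ t in closedBall x R, K (x - t) * f t ∂μ|
      = |∫ s in closedBall 0 R, K s * (f (x - s) - f x) + f x * K s ∂μ| := by
        rw [setIntegral_closedBall_comp_sub_left μ _ x]
        congr 2 with s
        rw [sub_sub_cancel]
        ring
    _ = |∫ s in closedBall 0 R, K s * (f (x - s) - f x) ∂μ| := by
        rw [integral_add hKsub (hK.const_mul _), integral_const_mul,
          setIntegral_closedBall_sphericalKernel_eq_zero μ hSmean, mul_zero, add_zero]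
    _ ≤ ∫ s in closedBall 0 R, M * (ω ‖s‖ / ‖s‖ ^ ((d : ℝ) - 1 + α)) ∂μ :=
        norm_integral_le_of_norm_le (f := fun s ↦ K s * (f (x - s) - f x)) hbound
          (ae_of_all _ fun s ↦ abs_sphericalKernel_mul_sub_le hM hf _ x s)
    _ = d * μ.real (ball 0 1) * M * ∫ r in Ioc 0 R, ω r / r ^ α := by
        rw [setIntegral_closedBall_fun_norm_addHaar μ
            fun r ↦ M * (ω r / r ^ ((d : ℝ) - 1 + α)),
          setIntegral_congr_fun measurableSet_Ioc hradial, integral_const_mul]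
        ring

end SphericalKernel

theorem stmt_3_general (n : ℕ) (hn : 2 ≤ n) (α : ℝ) (hα2 : α < 1)
    (S : EuclideanSpace ℝ (Fin n) → ℝ)
    (hScont : ContinuousOn S (sphere (0 : EuclideanSpace ℝ (Fin n)) 1))
    (hSmean : ∫ y : sphere (0 : EuclideanSpace ℝ (Fin n)) 1, S y
        ∂((volume : Measure (EuclideanSpace ℝ (Fin n))).toSphere) = 0) :
    ∃ C > 0, ∀ ω : ℝ → ℝ, ConcaveOn ℝ (Ici 0) ω → MonotoneOn ω (Ici 0) →
      ContinuousOn ω (Ici 0) → ω 0 = 0 →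
      ∀ f : EuclideanSpace ℝ (Fin n) → ℝ,
        (∀ x y, |f x - f y| ≤ ω ‖x - y‖) →
      ∀ (x : EuclideanSpace ℝ (Fin n)) (ξ : ℝ), 0 < ξ →
        IntegrableOn
          (fun t => S (‖x - t‖⁻¹ • (x - t)) / ‖x - t‖ ^ ((n : ℝ) - 1 + α) * f t)
          (closedBall x (2 * ξ)) →
        IntegrableOn (fun r => ω r / r ^ α) (Ioc 0 (2 * ξ)) →
        |∫ t in closedBall x (2 * ξ),
            S (‖x - t‖⁻¹ • (x - t)) / ‖x - t‖ ^ ((n : ℝ) - 1 + α) * f t| ≤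
          C * ∫ r in Ioc 0 (2 * ξ), ω r / r ^ α := by
  have : Nontrivial (EuclideanSpace ℝ (Fin n)) :=
    Module.nontrivial_of_finrank_pos (R := ℝ) (by rw [finrank_euclideanSpace_fin]; omega)
  obtain ⟨M, hM⟩ :=
    (isCompact_sphere (0 : EuclideanSpace ℝ (Fin n)) 1).exists_bound_of_continuousOn hScont
  have hS :
      Integrable (fun θ : sphere (0 : EuclideanSpace ℝ (Fin n)) 1 ↦ S θ) volume.toSphere :=
    hScont.domRestrict.integrable_of_hasCompactSupport (.of_compactSpace _)
  have hV : 0 < volume.real (ball (0 : EuclideanSpace ℝ (Fin n)) 1) :=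
    ENNReal.toReal_pos (measure_ball_pos _ _ one_pos).ne' measure_ball_lt_top.ne
  refine ⟨n * volume.real (ball (0 : EuclideanSpace ℝ (Fin n)) 1) * max M 1, by positivity,
    ?_⟩
  intro ω _ _ _ _ f hf x ξ _
  have key := abs_setIntegral_closedBall_sphericalKernel_mul_le volume hS
    (fun θ hθ ↦ (hM θ hθ).trans (le_max_left M 1)) hSmean hα2 hf x (2 * ξ)
  rw [finrank_euclideanSpace_fin] at key
  exact key

/-- Truncated singular integral bound: if f has modulus of continuity ω and
K(x) = S(x/|x|)/|x|^{n−1+α} with S continuous on the sphere and mean zero, then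
|∫_{|x−t|≤2ξ} K(x−t) f(t) dt| ≤ C ∫₀^{2ξ} ω(r)/r^α dr, with C = C(n, S). -/
theorem stmt_3 (n : ℕ) (hn : 2 ≤ n) (α : ℝ) (hα1 : 0 < α) (hα2 : α < 1)
    (S : EuclideanSpace ℝ (Fin n) → ℝ)
    (hScont : ContinuousOn S (sphere (0 : EuclideanSpace ℝ (Fin n)) 1))
    (hSmean : ∫ y : sphere (0 : EuclideanSpace ℝ (Fin n)) 1, S y
        ∂((volume : Measure (EuclideanSpace ℝ (Fin n))).toSphere) = 0) :
    ∃ C > 0, ∀ ω : ℝ → ℝ, ConcaveOn ℝ (Ici 0) ω → MonotoneOn ω (Ici 0) →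
      ContinuousOn ω (Ici 0) → ω 0 = 0 →
      ∀ f : EuclideanSpace ℝ (Fin n) → ℝ,
        (∀ x y, |f x - f y| ≤ ω ‖x - y‖) →
      ∀ (x : EuclideanSpace ℝ (Fin n)) (ξ : ℝ), 0 < ξ →
        IntegrableOn
          (fun t => S (‖x - t‖⁻¹ • (x - t)) / ‖x - t‖ ^ ((n : ℝ) - 1 + α) * f t)
          (closedBall x (2 * ξ)) →
        IntegrableOn (fun r => ω r / r ^ α) (Ioc 0 (2 * ξ)) →
        |∫ t in closedBall x (2 * ξ),
            S (‖x - t‖⁻¹ • (x - t)) / ‖x - t‖ ^ ((n : ℝ) - 1 + α) * f t| ≤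
          C * ∫ r in Ioc 0 (2 * ξ), ω r / r ^ α :=
  stmt_3_general n hn α hα2 S hScont hSmean
end

section
/- Define ω : [0,∞) → [0,∞) for α ∈ (0,1) by ω(ξ) = ξ − ξ^{1+α/2} for 0 ≤ ξ ≤ δ and ω'(ξ) = γ/(2(ξ + ξ^α)) for ξ > δ (with ω continuous at δ). If δ > 0 is sufficiently small and 0 < γ < δ, then ω is a strictly increasing, concave modulus of continuity on [0,∞) with ω(0) = 0, ω'(0) = 1, and lim_{η→0+} ω''(η) = −∞. -/
/- ω is the primitive `∫₀^ξ φ` of the piecewise derivative `φ = moc1Deriv`. On `[0, δ]`,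
`φ ≥ 1 - (1 + α/2) δ^{α/2}`, which is `≥ 1/2` once `δ ≤ (2 + α)^{-2/α}`, while beyond
`δ` we have `φ ≤ γ / (2δ) < 1/2`; so `φ` is positive and nonincreasing across the jump
at `δ`. The primitive of a positive nonincreasing function is strictly increasing and
concave, and a concave function on `[0, ∞)` is continuous as soon as it is continuous at
`0`. Near `0`, `ω(ξ) = ξ - ξ^{1+α/2}`, so `ω''(ξ) = -(1 + α/2)(α/2) ξ^{α/2 - 1} → -∞`. -/

open Set MeasureTheory Filter

/-- The modulus of continuity MOC₁: ω(ξ) = ξ − ξ^{1+α/2} on [0,δ] and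
ω'(ξ) = γ/(2(ξ + ξ^α)) for ξ > δ (continuous at δ). -/
noncomputable def moc1 (α δ γ : ℝ) (ξ : ℝ) : ℝ :=
  if ξ ≤ δ then ξ - ξ ^ (1 + α / 2)
  else (δ - δ ^ (1 + α / 2)) + ∫ η in Ioc δ ξ, γ / (2 * (η + η ^ α))

noncomputable def moc1Deriv (α δ γ ξ : ℝ) : ℝ :=
  if ξ ≤ δ then 1 - (1 + α / 2) * ξ ^ (α / 2) else γ / (2 * (ξ + ξ ^ α))

namespace AntitoneOn

variable {f : ℝ → ℝ} {a b : ℝ}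

theorem mul_sub_le_integral (hab : a ≤ b) (hf : AntitoneOn f (Icc a b)) :
    f b * (b - a) ≤ ∫ t in a..b, f t := by
  have h := intervalIntegral.integral_mono_on (μ := volume) hab intervalIntegrable_const
    ((uIcc_of_le hab ▸ hf).intervalIntegrable) fun t ht => hf ht (right_mem_Icc.2 hab) ht.2
  simpa [mul_comm] using h

theorem integral_le_mul_sub (hab : a ≤ b) (hf : AntitoneOn f (Icc a b)) :
    ∫ t in a..b, f t ≤ f a * (b - a) := by
  have h := intervalIntegral.integral_mono_on (μ := volume) hab
    ((uIcc_of_le hab ▸ hf).intervalIntegrable) intervalIntegrable_const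
    fun t ht => hf (left_mem_Icc.2 hab) ht ht.1
  simpa [mul_comm] using h

theorem intervalIntegrable_of_Ici (hf : AntitoneOn f (Ici a)) {x y : ℝ} (hx : a ≤ x)
    (hy : a ≤ y) : IntervalIntegrable f volume x y :=
  (hf.mono fun _ ht => le_trans (le_min hx hy) ht.1).intervalIntegrable

theorem integral_sub_integral (hf : AntitoneOn f (Ici a)) {x y : ℝ} (hx : a ≤ x)
    (hy : a ≤ y) :
    (∫ t in a..y, f t) - ∫ t in a..x, f t = ∫ t in x..y, f t :=
  intervalIntegral.integral_interval_sub_left (hf.intervalIntegrable_of_Ici le_rfl hy)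
    (hf.intervalIntegrable_of_Ici le_rfl hx)

theorem strictMonoOn_primitive (hf : AntitoneOn f (Ici a)) (hpos : ∀ x ∈ Ici a, 0 < f x) :
    StrictMonoOn (fun x => ∫ t in a..x, f t) (Ici a) := by
  intro x hx y hy hxy
  rw [← sub_pos, hf.integral_sub_integral hx hy]
  calc 0 < f y * (y - x) := mul_pos (hpos y hy) (sub_pos.2 hxy)
    _ ≤ ∫ t in x..y, f t := mul_sub_le_integral hxy.le (hf.mono fun _ ht => hx.trans ht.1)

theorem concaveOn_primitive (hf : AntitoneOn f (Ici a)) :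
    ConcaveOn ℝ (Ici a) (fun x => ∫ t in a..x, f t) := by
  refine concaveOn_of_slope_anti_adjacent (convex_Ici a) fun {x y z} hx hz hxy hyz => ?_
  have hy : a ≤ y := le_trans hx hxy.le
  simp only [hf.integral_sub_integral hy hz, hf.integral_sub_integral hx hy]
  calc (∫ t in y..z, f t) / (z - y) ≤ f y :=
        (div_le_iff₀ (sub_pos.2 hyz)).2 <|
          integral_le_mul_sub hyz.le (hf.mono fun _ ht => hy.trans ht.1)
    _ ≤ (∫ t in x..y, f t) / (y - x) :=
        (le_div_iff₀ (sub_pos.2 hxy)).2 <|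
          mul_sub_le_integral hxy.le (hf.mono fun _ ht => le_trans hx ht.1)

end AntitoneOn

section Moc1

variable {α δ γ : ℝ}

theorem hasDerivAt_self_sub_rpow (hα : 0 ≤ α) (t : ℝ) :
    HasDerivAt (fun s : ℝ => s - s ^ (1 + α / 2)) (1 - (1 + α / 2) * t ^ (α / 2)) t := by
  have h := Real.hasDerivAt_rpow_const (x := t) (p := 1 + α / 2) (Or.inr (by linarith))
  rw [add_sub_cancel_left] at h
  exact (hasDerivAt_id' t).sub h

theorem integral_one_sub_mul_rpow (hα : 0 ≤ α) (x : ℝ) :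
    ∫ t in (0 : ℝ)..x, (1 - (1 + α / 2) * t ^ (α / 2)) = x - x ^ (1 + α / 2) := by
  have hcont : Continuous fun t : ℝ => 1 - (1 + α / 2) * t ^ (α / 2) :=
    continuous_const.sub (continuous_const.mul (Real.continuous_rpow_const (by linarith)))
  rw [intervalIntegral.integral_eq_sub_of_hasDerivAt (fun t _ => hasDerivAt_self_sub_rpow hα t)
    (hcont.intervalIntegrable _ _), Real.zero_rpow (by linarith), sub_zero, sub_zero]

theorem one_sub_mul_rpow_anti (hα : 0 ≤ α) {x y : ℝ} (hx : 0 ≤ x) (hxy : x ≤ y) :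
    1 - (1 + α / 2) * y ^ (α / 2) ≤ 1 - (1 + α / 2) * x ^ (α / 2) := by
  have := Real.rpow_le_rpow hx hxy (by linarith : 0 ≤ α / 2)
  nlinarith

theorem div_two_mul_add_rpow_anti (hα : 0 ≤ α) (hγ : 0 ≤ γ) {s t : ℝ} (hs : 0 < s)
    (hst : s ≤ t) : γ / (2 * (t + t ^ α)) ≤ γ / (2 * (s + s ^ α)) := by
  have := Real.rpow_le_rpow hs.le hst hα
  have := Real.rpow_pos_of_pos hs α
  exact div_le_div_of_nonneg_left hγ (by positivity) (by linarith)

theorem moc1_jump_le (hγ : 0 ≤ γ) (hγδ : γ < δ)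
    (hsmall : (1 + α / 2) * δ ^ (α / 2) ≤ 1 / 2) :
    γ / (2 * (δ + δ ^ α)) ≤ 1 - (1 + α / 2) * δ ^ (α / 2) := by
  have hδ : 0 < δ := hγ.trans_lt hγδ
  have := Real.rpow_pos_of_pos hδ α
  rw [div_le_iff₀ (by positivity)]
  nlinarith

theorem moc1Deriv_antitoneOn (hα : 0 ≤ α) (hγ : 0 ≤ γ) (hγδ : γ < δ)
    (hsmall : (1 + α / 2) * δ ^ (α / 2) ≤ 1 / 2) :
    AntitoneOn (moc1Deriv α δ γ) (Ici 0) := by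
  have hδ : 0 < δ := hγ.trans_lt hγδ
  intro x hx y _ hxy
  unfold moc1Deriv
  split_ifs with hyδ hxδ hxδ
  · exact one_sub_mul_rpow_anti hα hx hxy
  · exact absurd (hxy.trans hyδ) hxδ
  · calc γ / (2 * (y + y ^ α)) ≤ γ / (2 * (δ + δ ^ α)) :=
          div_two_mul_add_rpow_anti hα hγ hδ (not_le.1 hyδ).le
      _ ≤ 1 - (1 + α / 2) * δ ^ (α / 2) := moc1_jump_le hγ hγδ hsmall
      _ ≤ 1 - (1 + α / 2) * x ^ (α / 2) := one_sub_mul_rpow_anti hα hx hxδ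
  · exact div_two_mul_add_rpow_anti hα hγ (hδ.trans (not_le.1 hxδ)) hxy

theorem moc1Deriv_pos (hα : 0 ≤ α) (hγ : 0 < γ) (hγδ : γ < δ)
    (hsmall : (1 + α / 2) * δ ^ (α / 2) ≤ 1 / 2) {x : ℝ} (hx : 0 ≤ x) :
    0 < moc1Deriv α δ γ x := by
  unfold moc1Deriv
  split_ifs with hxδ
  · linarith [one_sub_mul_rpow_anti hα hx hxδ]
  · have hx0 : 0 < x := (hγ.trans hγδ).trans (not_le.1 hxδ)
    have := Real.rpow_pos_of_pos hx0 α
    positivity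

theorem moc1_eq_integral (hα : 0 ≤ α) (hδ : 0 ≤ δ)
    (hanti : AntitoneOn (moc1Deriv α δ γ) (Ici 0)) {x : ℝ} (hx : 0 ≤ x) :
    moc1 α δ γ x = ∫ t in (0 : ℝ)..x, moc1Deriv α δ γ t := by
  have lower : ∀ {x}, 0 ≤ x → x ≤ δ →
      (∫ t in (0 : ℝ)..x, moc1Deriv α δ γ t) = x - x ^ (1 + α / 2) := fun hx hxδ => by
    rw [← integral_one_sub_mul_rpow hα]
    refine intervalIntegral.integral_congr fun t ht => ?_
    rw [uIcc_of_le hx] at ht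
    exact if_pos (ht.2.trans hxδ)
  unfold moc1
  split_ifs with hxδ
  · exact (lower hx hxδ).symm
  · have hδx : δ < x := not_le.1 hxδ
    rw [← intervalIntegral.integral_add_adjacent_intervals
        (hanti.intervalIntegrable_of_Ici le_rfl hδ) (hanti.intervalIntegrable_of_Ici hδ hx),
      lower hδ le_rfl, intervalIntegral.integral_of_le hδx.le]
    congr 1
    exact setIntegral_congr_fun measurableSet_Ioc fun t ht => (if_neg (not_le.2 ht.1)).symm

theorem moc1_eventuallyEq {ξ : ℝ} (hξ : ξ < δ) :
    moc1 α δ γ =ᶠ[nhds ξ] fun s => s - s ^ (1 + α / 2) := by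
  filter_upwards [Iio_mem_nhds hξ] with s hs
  exact if_pos (le_of_lt hs)

theorem deriv_deriv_moc1 (hα : 0 ≤ α) {η : ℝ} (hη : 0 < η) (hηδ : η < δ) :
    deriv (deriv (moc1 α δ γ)) η = -((1 + α / 2) * (α / 2)) * η ^ (α / 2 - 1) := by
  have hderiv : deriv (moc1 α δ γ) =ᶠ[nhds η] fun t => 1 - (1 + α / 2) * t ^ (α / 2) := by
    filter_upwards [Iio_mem_nhds hηδ] with t ht
    rw [(moc1_eventuallyEq ht).deriv_eq, (hasDerivAt_self_sub_rpow hα t).deriv]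
  rw [hderiv.deriv_eq]
  have h := ((Real.hasDerivAt_rpow_const (p := α / 2) (Or.inl hη.ne')).const_mul
    (1 + α / 2)).const_sub 1
  rw [h.deriv]
  ring

end Moc1

/-- For δ sufficiently small and 0 < γ < δ, MOC₁ is a strictly increasing, concave,
continuous modulus of continuity with ω(0) = 0, ω'(0) = 1 and ω''(η) → −∞ as η → 0⁺. -/
theorem stmt_9 (α : ℝ) (hα1 : 0 < α) (hα2 : α < 1) :
    ∃ δ₀ > 0, ∀ δ γ : ℝ, 0 < γ → γ < δ → δ < δ₀ →
      StrictMonoOn (moc1 α δ γ) (Ici 0) ∧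
      ConcaveOn ℝ (Ici 0) (moc1 α δ γ) ∧
      ContinuousOn (moc1 α δ γ) (Ici 0) ∧
      moc1 α δ γ 0 = 0 ∧
      HasDerivWithinAt (moc1 α δ γ) 1 (Ici 0) 0 ∧
      Tendsto (fun η => deriv (deriv (moc1 α δ γ)) η) (nhdsWithin 0 (Ioi 0)) atBot := by
  refine ⟨(2 + α)⁻¹ ^ (α / 2)⁻¹, by positivity, fun δ γ hγ hγδ hδδ₀ => ?_⟩
  have hδ : 0 < δ := hγ.trans hγδ
  have hsmall : (1 + α / 2) * δ ^ (α / 2) ≤ 1 / 2 := by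
    have h := Real.rpow_lt_rpow hδ.le hδδ₀ (by positivity : 0 < α / 2)
    rw [Real.rpow_inv_rpow (by positivity) (by positivity)] at h
    calc (1 + α / 2) * δ ^ (α / 2) ≤ (1 + α / 2) * (2 + α)⁻¹ := by gcongr
      _ = 1 / 2 := by field_simp
  have hanti := moc1Deriv_antitoneOn hα1.le hγ.le hγδ hsmall
  have heq : EqOn (fun x => ∫ t in (0 : ℝ)..x, moc1Deriv α δ γ t) (moc1 α δ γ) (Ici 0) :=
    fun x hx => (moc1_eq_integral hα1.le hδ.le hanti hx).symm
  have hconcave := hanti.concaveOn_primitive.congr heq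
  have hstrict := (hanti.strictMonoOn_primitive fun _ hx =>
    moc1Deriv_pos hα1.le hγ hγδ hsmall hx).congr heq
  have hderiv0 : HasDerivWithinAt (moc1 α δ γ) 1 (Ici 0) 0 := by
    have h := hasDerivAt_self_sub_rpow hα1.le 0
    rw [Real.zero_rpow (by positivity), mul_zero, sub_zero] at h
    exact (h.congr_of_eventuallyEq (moc1_eventuallyEq hδ)).hasDerivWithinAt
  have hblowup :
      Tendsto (fun η => deriv (deriv (moc1 α δ γ)) η) (nhdsWithin 0 (Ioi 0)) atBot := by
    have hlim := Tendsto.const_mul_atTop_of_neg (by nlinarith : -((1 + α / 2) * (α / 2)) < 0)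
      (tendsto_rpow_neg_nhdsGT_zero (by linarith : α / 2 - 1 < 0))
    refine hlim.congr' ?_
    filter_upwards [Ioo_mem_nhdsGT hδ] with η hη
    exact (deriv_deriv_moc1 hα1.le hη.1 hη.2).symm
  refine ⟨hstrict, hconcave, hconcave.continuousOn_Ici hderiv0.continuousWithinAt, ?_, hderiv0,
    hblowup⟩
  rw [moc1, if_pos hδ.le, Real.zero_rpow (by positivity), sub_zero]
end

section
/- Let α ∈ (0,1) and let ω be the modulus with ω(ξ) = ξ − ξ^{1+α/2} on [0,δ] and ω'(ξ) = γ/(2(ξ+ξ^α)) for ξ > δ. If γ < α²δ and δ is small enough, then for all ξ ≥ δ: ∫_ξ^∞ ω(η)/η^{1+α} dη ≤ (2/α) ω(ξ)/ξ^α. -/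
/-! Beyond `δ` the modulus grows at most logarithmically, `ω(η) ≤ ω(ξ) + (γ/2) log (η/ξ)`,
because `ω' ≤ γ/(2η)` there. The bound `log t ≤ (t^c - 1)/c` with `c = α/2` turns the tail
integral into integrals of powers of `η`, which gives `(ω(ξ)/α + γ/α²)/ξ^α`. For `δ` small,
`ω ≥ αδ` on `[δ, ∞)`, so `γ < α²δ` makes the second term at most `ω(ξ)/(α ξ^α)`. -/

open Set MeasureTheory

open Real

lemma Real.log_le_rpow_sub_one_div {t c : ℝ} (ht : 0 < t) (hc : 0 < c) :
    log t ≤ (t ^ c - 1) / c := by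
  rw [le_div_iff₀' hc, ← log_rpow ht]
  exact log_le_sub_one_of_pos (rpow_pos_of_pos ht c)

section PowerTail

variable {ξ α s : ℝ}

lemma integrableOn_Ioi_rpow_div_rpow_one_add (hξ : 0 < ξ) (hs : s < α) :
    IntegrableOn (fun η : ℝ => η ^ s / η ^ (1 + α)) (Ioi ξ) :=
  (integrableOn_Ioi_rpow_of_lt (a := s - (1 + α)) (by linarith) hξ).congr_fun
    (fun η hη => rpow_sub (hξ.trans hη) s (1 + α)) measurableSet_Ioi

lemma integral_Ioi_rpow_div_rpow_one_add (hξ : 0 < ξ) (hs : s < α) :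
    ∫ η in Ioi ξ, η ^ s / η ^ (1 + α) = ξ ^ (s - α) / (α - s) := by
  rw [setIntegral_congr_fun measurableSet_Ioi
      (fun η hη => (rpow_sub (hξ.trans hη) s (1 + α)).symm),
    integral_Ioi_rpow_of_lt (by linarith) hξ, show s - (1 + α) + 1 = s - α by ring,
    neg_div, ← div_neg, neg_sub]

end PowerTail

lemma setIntegral_Ioi_div_rpow_le_of_le_add_log {f : ℝ → ℝ} {ξ α a b c : ℝ} (hξ : 0 < ξ)
    (hc : 0 < c) (hcα : c < α) (hf : AEStronglyMeasurable f (volume.restrict (Ioi ξ)))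
    (hf₀ : ∀ η ∈ Ioi ξ, 0 ≤ f η) (hfle : ∀ η ∈ Ioi ξ, f η ≤ a + b * log (η / ξ)) (hb : 0 ≤ b) :
    ∫ η in Ioi ξ, f η / η ^ (1 + α) ≤ (a / α + b / (α * (α - c))) / ξ ^ α := by
  have hα : 0 < α := hc.trans hcα
  set g : ℝ → ℝ := fun η =>
    (a - b / c) * (η ^ (0 : ℝ) / η ^ (1 + α)) + b / (c * ξ ^ c) * (η ^ c / η ^ (1 + α))
  have hg : IntegrableOn g (Ioi ξ) :=
    ((integrableOn_Ioi_rpow_div_rpow_one_add hξ hα).const_mul _).add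
      ((integrableOn_Ioi_rpow_div_rpow_one_add hξ hcα).const_mul _)
  have hfg : ∀ η ∈ Ioi ξ, f η / η ^ (1 + α) ≤ g η := by
    intro η hη
    have hη₀ : 0 < η := hξ.trans hη
    have hlog := log_le_rpow_sub_one_div (div_pos hη₀ hξ) hc
    rw [div_rpow hη₀.le hξ.le] at hlog
    calc f η / η ^ (1 + α) ≤ (a + b * ((η ^ c / ξ ^ c - 1) / c)) / η ^ (1 + α) := by
          gcongr
          exact (hfle η hη).trans (by gcongr)
      _ = g η := by
          simp only [g, rpow_zero]
          field_simp
          ring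
  have hfint : IntegrableOn (fun η => f η / η ^ (1 + α)) (Ioi ξ) := by
    have hmeas := hf.aemeasurable.div (measurable_id.pow_const (1 + α)).aemeasurable
    refine hg.mono' hmeas.aestronglyMeasurable ?_
    filter_upwards [ae_restrict_mem measurableSet_Ioi] with η hη
    have hη₀ : 0 < η := hξ.trans hη
    rw [Real.norm_of_nonneg (div_nonneg (hf₀ η hη) (by positivity))]
    exact hfg η hη
  calc ∫ η in Ioi ξ, f η / η ^ (1 + α) ≤ ∫ η in Ioi ξ, g η :=
        setIntegral_mono_on hfint hg measurableSet_Ioi hfg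
    _ = (a - b / c) * (ξ ^ (0 - α) / (α - 0)) + b / (c * ξ ^ c) * (ξ ^ (c - α) / (α - c)) := by
        rw [integral_add ((integrableOn_Ioi_rpow_div_rpow_one_add hξ hα).const_mul _)
            ((integrableOn_Ioi_rpow_div_rpow_one_add hξ hcα).const_mul _),
          integral_const_mul, integral_const_mul, integral_Ioi_rpow_div_rpow_one_add hξ hα,
          integral_Ioi_rpow_div_rpow_one_add hξ hcα]
    _ = (a / α + b / (α * (α - c))) / ξ ^ α := by
        rw [rpow_sub hξ, rpow_sub hξ, rpow_zero]
        have : α - c ≠ 0 := (sub_pos.2 hcα).ne'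
        field_simp [hα.ne']
        ring

section Modulus

variable {α δ γ ξ η : ℝ}

lemma continuousOn_moc1_density :
    ContinuousOn (fun s : ℝ => γ / (2 * (s + s ^ α))) (Ioi 0) := by
  refine continuousOn_const.div ?_ fun s (hs : 0 < s) => by positivity
  exact continuousOn_const.mul
    (continuousOn_id.add (continuousOn_id.rpow_const fun s hs => Or.inl (ne_of_gt hs)))

lemma intervalIntegrable_moc1_density {a b : ℝ} (ha : 0 < a) (hb : 0 < b) :
    IntervalIntegrable (fun s : ℝ => γ / (2 * (s + s ^ α))) volume a b :=
  (continuousOn_moc1_density.mono fun _ hs => lt_min ha hb |>.trans_le hs.1).intervalIntegrable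

lemma moc1_eq_add_intervalIntegral (hξ : δ ≤ ξ) :
    moc1 α δ γ ξ = δ - δ ^ (1 + α / 2) + ∫ s in δ..ξ, γ / (2 * (s + s ^ α)) := by
  rcases hξ.eq_or_lt with rfl | hlt
  · simp [moc1]
  · rw [moc1, if_neg hlt.not_ge, intervalIntegral.integral_of_le hξ]

lemma moc1_sub_moc1 (hδ : 0 < δ) (hξ : δ ≤ ξ) (hη : δ ≤ η) :
    moc1 α δ γ η - moc1 α δ γ ξ = ∫ s in ξ..η, γ / (2 * (s + s ^ α)) := by
  rw [moc1_eq_add_intervalIntegral hξ, moc1_eq_add_intervalIntegral hη, add_sub_add_left_eq_sub,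
    intervalIntegral.integral_interval_sub_left
      (intervalIntegrable_moc1_density hδ (hδ.trans_le hη))
      (intervalIntegrable_moc1_density hδ (hδ.trans_le hξ))]

lemma moc1_le_add_log (hδ : 0 < δ) (hγ : 0 ≤ γ) (hξ : δ ≤ ξ) (hη : ξ ≤ η) :
    moc1 α δ γ η ≤ moc1 α δ γ ξ + γ / 2 * log (η / ξ) := by
  have hξ₀ : 0 < ξ := hδ.trans_le hξ
  have hη₀ : 0 < η := hξ₀.trans_le hη
  have hinv : IntervalIntegrable (fun s : ℝ => γ / 2 * s⁻¹) volume ξ η :=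
    (intervalIntegral.intervalIntegrable_inv (fun s hs => (lt_min hξ₀ hη₀ |>.trans_le hs.1).ne')
      continuousOn_id).const_mul _
  have hdensity : ∫ s in ξ..η, γ / (2 * (s + s ^ α)) ≤ ∫ s in ξ..η, γ / 2 * s⁻¹ := by
    refine intervalIntegral.integral_mono_on hη (intervalIntegrable_moc1_density hξ₀ hη₀) hinv
      fun s hs => ?_
    have hs₀ : 0 < s := hξ₀.trans_le hs.1
    calc γ / (2 * (s + s ^ α)) ≤ γ / (2 * s) :=
          div_le_div_of_nonneg_left hγ (by positivity) (by linarith [rpow_nonneg hs₀.le α])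
      _ = γ / 2 * s⁻¹ := by ring
  rw [intervalIntegral.integral_const_mul, integral_inv_of_pos hξ₀ hη₀] at hdensity
  linarith [moc1_sub_moc1 (α := α) (γ := γ) hδ hξ (hξ.trans hη)]

lemma mul_le_moc1 (hδ : 0 < δ) (hδα : δ ^ (α / 2) ≤ 1 - α) (hγ : 0 ≤ γ) (hξ : δ ≤ ξ) :
    α * δ ≤ moc1 α δ γ ξ := by
  have hpow : δ ^ (1 + α / 2) ≤ δ * (1 - α) := by
    rw [rpow_add hδ, rpow_one]
    exact mul_le_mul_of_nonneg_left hδα hδ.le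
  have hint : 0 ≤ ∫ s in δ..ξ, γ / (2 * (s + s ^ α)) :=
    intervalIntegral.integral_nonneg hξ fun s hs => by
      have : 0 < s := hδ.trans_le hs.1
      positivity
  rw [moc1_eq_add_intervalIntegral hξ]
  linarith

lemma measurable_moc1 (hδ : 0 < δ) (hγ : 0 ≤ γ) : Measurable (moc1 α δ γ) := by
  have hmono : Monotone fun x : ℝ => ∫ s in Ioc δ x, γ / (2 * (s + s ^ α)) := by
    intro a b hab
    refine setIntegral_mono_set ?_ ?_ (Ioc_subset_Ioc_right hab).eventuallyLE
    · exact (continuousOn_moc1_density.mono fun s hs => hδ.trans_le hs.1).integrableOn_Icc.mono_set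
        Ioc_subset_Icc_self
    · filter_upwards [ae_restrict_mem measurableSet_Ioc] with s hs
      have : 0 < s := hδ.trans hs.1
      positivity
  exact Measurable.ite measurableSet_Iic (by fun_prop) (measurable_const.add hmono.measurable)

end Modulus

/-- If γ < α²δ and δ is small enough, then for all ξ ≥ δ:
∫_ξ^∞ ω(η)/η^{1+α} dη ≤ (2/α) ω(ξ)/ξ^α for ω = MOC₁. -/
theorem stmt_11 (α : ℝ) (hα1 : 0 < α) (hα2 : α < 1) :
    ∃ δ₀ > 0, ∀ δ γ : ℝ, 0 < δ → δ < δ₀ → 0 < γ → γ < α ^ 2 * δ →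
      ∀ ξ : ℝ, δ ≤ ξ →
        (∫ η in Ioi ξ, moc1 α δ γ η / η ^ (1 + α)) ≤
          (2 / α) * (moc1 α δ γ ξ / ξ ^ α) := by
  refine ⟨(1 - α) ^ (α / 2)⁻¹, rpow_pos_of_pos (sub_pos.2 hα2) _, ?_⟩
  intro δ γ hδ hδ₀ hγ hγδ ξ hξ
  have hξ₀ : 0 < ξ := hδ.trans_le hξ
  have hδα : δ ^ (α / 2) ≤ 1 - α :=
    (le_rpow_inv_iff_of_pos hδ.le (sub_pos.2 hα2).le (half_pos hα1)).1 hδ₀.le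
  have hω : ∀ η, δ ≤ η → α * δ ≤ moc1 α δ γ η := fun η hη => mul_le_moc1 hδ hδα hγ.le hη
  have htail := setIntegral_Ioi_div_rpow_le_of_le_add_log hξ₀ (half_pos hα1)
    (half_lt_self hα1) (measurable_moc1 hδ hγ.le).aestronglyMeasurable
    (fun η hη => (mul_pos hα1 hδ).le.trans (hω η (hξ.trans hη.out.le)))
    (fun η hη => moc1_le_add_log hδ hγ.le hξ hη.out.le) (half_pos hγ).le
  have hγω : γ / α ^ 2 ≤ moc1 α δ γ ξ / α := by
    rw [div_le_div_iff₀ (by positivity) hα1]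
    nlinarith [hω ξ hξ]
  calc _ ≤ _ := htail
    _ = (moc1 α δ γ ξ / α + γ / α ^ 2) / ξ ^ α := by field_simp; ring
    _ ≤ (moc1 α δ γ ξ / α + moc1 α δ γ ξ / α) / ξ ^ α := by gcongr
    _ = 2 / α * (moc1 α δ γ ξ / ξ ^ α) := by ring
end

section
/- Let α ∈ (0,1) and ω be as in MOC₁ (ω(ξ) = ξ − ξ^{1+α/2} on [0,δ], ω'(ξ) = γ/(2(ξ+ξ^α)) for ξ > δ). If γ is small enough relative to δ, then for all ξ ≥ δ: ω(2ξ) ≤ (3/2) ω(ξ). -/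
/-!
Past `δ` the derivative of `ω` is `γ / (2(η + η^α)) ≤ γ / (2η)`, so
`ω(2ξ) - ω(ξ) ≤ (γ/2) log 2`. Since `ω` is increasing, `ω(ξ) ≥ ω(δ) = δ(1 - δ^{α/2})`, and this
is at least `γ log 2` once `γ < α²δ` and `δ^{α/2} ≤ 1 - α² log 2`; the latter holds for small `δ`
because `α² log 2 < 1`.
-/

open Set MeasureTheory

open Real

namespace Moc1

variable {α γ : ℝ}

lemma continuousOn_integrand : ContinuousOn (fun η : ℝ => γ / (2 * (η + η ^ α))) (Ioi 0) := by
  refine continuousOn_const.div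
    (continuousOn_const.mul (continuousOn_id.add fun η hη => ?_)) fun η hη => ?_
  · exact (continuousAt_rpow_const η α (Or.inl (mem_Ioi.1 hη).ne')).continuousWithinAt
  · have := rpow_pos_of_pos (mem_Ioi.1 hη) α
    have := mem_Ioi.1 hη
    positivity

lemma intervalIntegrable_integrand {a b : ℝ} (ha : 0 < a) (hab : a ≤ b) :
    IntervalIntegrable (fun η : ℝ => γ / (2 * (η + η ^ α))) volume a b :=
  (continuousOn_integrand.mono fun _ hη => ha.trans_le hη.1).intervalIntegrable_of_Icc hab

lemma integrand_nonneg (hγ : 0 ≤ γ) {η : ℝ} (hη : 0 < η) : 0 ≤ γ / (2 * (η + η ^ α)) := by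
  have := rpow_pos_of_pos hη α
  positivity

lemma integrand_le (hγ : 0 ≤ γ) {η : ℝ} (hη : 0 < η) : γ / (2 * (η + η ^ α)) ≤ γ / 2 * η⁻¹ := by
  have := rpow_pos_of_pos hη α
  calc γ / (2 * (η + η ^ α)) ≤ γ / (2 * η) := by gcongr; linarith
    _ = γ / 2 * η⁻¹ := by ring

lemma eq_add_integral {δ x : ℝ} (hx : δ ≤ x) :
    moc1 α δ γ x = (δ - δ ^ (1 + α / 2)) + ∫ η in δ..x, γ / (2 * (η + η ^ α)) := by
  rw [intervalIntegral.integral_of_le hx, moc1]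
  rcases hx.eq_or_lt with rfl | hlt
  · simp
  · rw [if_neg hlt.not_ge]

lemma two_mul_eq_add_integral {δ ξ : ℝ} (hδ : 0 < δ) (hξ : δ ≤ ξ) :
    moc1 α δ γ (2 * ξ) = moc1 α δ γ ξ + ∫ η in ξ..(2 * ξ), γ / (2 * (η + η ^ α)) := by
  have hξ2 : ξ ≤ 2 * ξ := by linarith
  rw [eq_add_integral (hξ.trans hξ2), eq_add_integral hξ, add_assoc,
    intervalIntegral.integral_add_adjacent_intervals (intervalIntegrable_integrand hδ hξ)
      (intervalIntegrable_integrand (hδ.trans_le hξ) hξ2)]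

lemma base_le {δ ξ : ℝ} (hδ : 0 < δ) (hγ : 0 ≤ γ) (hξ : δ ≤ ξ) :
    δ - δ ^ (1 + α / 2) ≤ moc1 α δ γ ξ := by
  rw [eq_add_integral hξ, le_add_iff_nonneg_right]
  exact intervalIntegral.integral_nonneg hξ fun η hη => integrand_nonneg hγ (hδ.trans_le hη.1)

lemma integral_doubling_le_log_two {ξ : ℝ} (hγ : 0 ≤ γ) (hξ : 0 < ξ) :
    ∫ η in ξ..(2 * ξ), γ / (2 * (η + η ^ α)) ≤ γ / 2 * log 2 := by
  have hξ2 : ξ ≤ 2 * ξ := by linarith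
  calc ∫ η in ξ..(2 * ξ), γ / (2 * (η + η ^ α))
      ≤ ∫ η in ξ..(2 * ξ), γ / 2 * η⁻¹ := by
        refine intervalIntegral.integral_mono_on hξ2 (intervalIntegrable_integrand hξ hξ2)
          ((intervalIntegral.intervalIntegrable_inv (fun η hη => ?_)
            continuousOn_id).const_mul _) fun η hη => integrand_le hγ (hξ.trans_le hη.1)
        rw [uIcc_of_le hξ2] at hη
        exact (hξ.trans_le hη.1).ne'
    _ = γ / 2 * log 2 := by
        rw [intervalIntegral.integral_const_mul, integral_inv_of_pos hξ (by linarith),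
          mul_div_cancel_right₀ _ hξ.ne']

lemma gamma_mul_log_two_le_base {δ : ℝ} (hδ : 0 < δ) (hsmall : δ ^ (α / 2) ≤ 1 - α ^ 2 * log 2)
    (hγ : γ ≤ α ^ 2 * δ) : γ * log 2 ≤ δ - δ ^ (1 + α / 2) := by
  have hsplit : δ - δ ^ (1 + α / 2) = δ * (1 - δ ^ (α / 2)) := by
    rw [rpow_add hδ, rpow_one]
    ring
  rw [hsplit]
  nlinarith [log_pos one_lt_two]

end Moc1

/-- If γ is small enough relative to δ (γ < α²δ, δ small), then for all ξ ≥ δ: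
ω(2ξ) ≤ (3/2) ω(ξ) for ω = MOC₁. -/
theorem stmt_12 (α : ℝ) (hα1 : 0 < α) (hα2 : α < 1) :
    ∃ δ₀ > 0, ∀ δ γ : ℝ, 0 < δ → δ < δ₀ → 0 < γ → γ < α ^ 2 * δ →
      ∀ ξ : ℝ, δ ≤ ξ → moc1 α δ γ (2 * ξ) ≤ (3 / 2) * moc1 α δ γ ξ := by
  have hc : 0 < 1 - α ^ 2 * log 2 := by nlinarith [log_two_lt_d9]
  refine ⟨(1 - α ^ 2 * log 2) ^ (α / 2)⁻¹, rpow_pos_of_pos hc _, fun δ γ hδ hδ₀ hγ hγα ξ hξ => ?_⟩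
  have hsmall : δ ^ (α / 2) ≤ 1 - α ^ 2 * log 2 :=
    ((lt_rpow_inv_iff_of_pos hδ.le hc.le (by positivity)).1 hδ₀).le
  have hbase := Moc1.gamma_mul_log_two_le_base hδ hsmall hγα.le
  have hlower := Moc1.base_le (α := α) hδ hγ.le hξ
  have htail := Moc1.integral_doubling_le_log_two (α := α) hγ.le (hδ.trans_le hξ)
  rw [Moc1.two_mul_eq_add_integral hδ hξ]
  linarith
end

section
/- Let ω be a concave increasing modulus of continuity with ω(2ξ) ≤ (3/2)ω(ξ) for ξ ≥ δ. Then for ξ ≥ δ and 0 < α < 2, ∫_{ξ/2}^∞ (ω(2η+ξ) − ω(2η−ξ) − 2ω(ξ))/η^{1+α} dη ≤ −(2^α/(2α)) ω(ξ)/ξ^α. -/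
open Set MeasureTheory

/-!
By concavity and `ω 0 = 0`, ω is subadditive on `[0, ∞)`, so for `η ≥ ξ/2` the increment
`ω (2η + ξ) - ω (2η - ξ)` is at most `ω (2ξ) ≤ (3/2) ω ξ`. Hence the numerator of the integrand is
at most `-(1/2) ω ξ`, and integrating against `η ^ (-1-α)` over `(ξ/2, ∞)` gives the bound.
-/

namespace ConcaveOn

variable {f : ℝ → ℝ}

theorem mul_le_map_mul (hf : ConcaveOn ℝ (Ici 0) f) (h0 : f 0 = 0) {x t : ℝ}
    (hx : 0 ≤ x) (ht₀ : 0 ≤ t) (ht₁ : t ≤ 1) : t * f x ≤ f (t * x) := by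
  have h := hf.2 (mem_Ici.2 hx) (self_mem_Ici (a := (0 : ℝ))) ht₀ (sub_nonneg.2 ht₁)
    (add_sub_cancel t 1)
  simpa only [smul_eq_mul, h0, mul_zero, add_zero] using h

theorem map_add_le (hf : ConcaveOn ℝ (Ici 0) f) (h0 : f 0 = 0) {b c : ℝ}
    (hb : 0 ≤ b) (hc : 0 ≤ c) : f (b + c) ≤ f b + f c := by
  rcases (add_nonneg hb hc).eq_or_lt with hs | hs
  · obtain ⟨rfl, rfl⟩ := (add_eq_zero_iff_of_nonneg hb hc).1 hs.symm
    simp only [add_zero, h0, le_refl]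
  have hb' := hf.mul_le_map_mul h0 hs.le (div_nonneg hb hs.le)
    (div_le_one_of_le₀ (le_add_of_nonneg_right hc) hs.le)
  have hc' := hf.mul_le_map_mul h0 hs.le (div_nonneg hc hs.le)
    (div_le_one_of_le₀ (le_add_of_nonneg_left hb) hs.le)
  rw [div_mul_cancel₀ _ hs.ne'] at hb' hc'
  calc f (b + c) = b / (b + c) * f (b + c) + c / (b + c) * f (b + c) := by
        rw [← add_mul, ← add_div, div_self hs.ne', one_mul]
    _ ≤ f b + f c := add_le_add hb' hc'

theorem continuousOn_Ioi (hf : ConcaveOn ℝ (Ici 0) f) : ContinuousOn f (Ioi 0) := by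
  simpa only [interior_Ici] using hf.continuousOn_interior

end ConcaveOn

theorem setIntegral_Ioi_div_rpow_le {g : ℝ → ℝ} {c α L K : ℝ} (hc : 0 < c) (hα : 0 < α)
    (hg : ContinuousOn g (Ioi c)) (hgL : ∀ η ∈ Ioi c, L ≤ g η) (hgK : ∀ η ∈ Ioi c, g η ≤ K) :
    ∫ η in Ioi c, g η / η ^ (1 + α) ≤ K * c ^ (-α) / α := by
  have hexp : -(1 + α) < -1 := by linarith
  have hdiv : ∀ η ∈ Ioi c, ∀ a : ℝ, a / η ^ (1 + α) = a * η ^ (-(1 + α)) := fun η hη a => by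
    rw [Real.rpow_neg (hc.trans hη).le, div_eq_mul_inv]
  have hkernel : IntegrableOn (fun η : ℝ => η ^ (-(1 + α))) (Ioi c) :=
    integrableOn_Ioi_rpow_of_lt hexp hc
  have hint : IntegrableOn (fun η => g η / η ^ (1 + α)) (Ioi c) := by
    refine (hkernel.bdd_mul (c := max |L| |K|)
      (hg.aestronglyMeasurable measurableSet_Ioi) ?_).congr ?_
    · filter_upwards [ae_restrict_mem measurableSet_Ioi] with η hη
      exact abs_le_max_abs_abs (hgL η hη) (hgK η hη)
    · filter_upwards [ae_restrict_mem measurableSet_Ioi] with η hη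
      rw [hdiv η hη]
  calc ∫ η in Ioi c, g η / η ^ (1 + α)
      ≤ ∫ η in Ioi c, K * η ^ (-(1 + α)) :=
        setIntegral_mono_on hint (hkernel.const_mul K) measurableSet_Ioi fun η hη => by
          rw [hdiv η hη]
          exact mul_le_mul_of_nonneg_right (hgK η hη) (Real.rpow_nonneg (hc.trans hη).le _)
    _ = K * c ^ (-α) / α := by
        rw [integral_const_mul, integral_Ioi_rpow_of_lt hexp hc, show -(1 + α) + 1 = -α by ring]
        field_simp

theorem stmt_13_general (α δ : ℝ) (hα1 : 0 < α) (hδ : 0 < δ)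
    (ω : ℝ → ℝ) (hconc : ConcaveOn ℝ (Ici 0) ω)
    (hmono : MonotoneOn ω (Ici 0)) (hω0 : ω 0 = 0)
    (hdbl : ∀ ξ : ℝ, δ ≤ ξ → ω (2 * ξ) ≤ (3 / 2) * ω ξ) :
    ∀ ξ : ℝ, δ ≤ ξ →
      (∫ η in Ioi (ξ / 2), (ω (2 * η + ξ) - ω (2 * η - ξ) - 2 * ω ξ) / η ^ (1 + α)) ≤
        -((2 : ℝ) ^ α / (2 * α)) * (ω ξ / ξ ^ α) := by
  intro ξ hξ
  have hξ0 : 0 < ξ := hδ.trans_le hξ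
  have hcont : ContinuousOn (fun η => ω (2 * η + ξ) - ω (2 * η - ξ) - 2 * ω ξ) (Ioi (ξ / 2)) := by
    refine ((hconc.continuousOn_Ioi.comp (by fun_prop) fun η hη => ?_).sub
      (hconc.continuousOn_Ioi.comp (by fun_prop) fun η hη => ?_)).sub continuousOn_const <;>
    · simp only [mem_Ioi] at hη ⊢; linarith
  calc _ ≤ -(1 / 2) * ω ξ * (ξ / 2) ^ (-α) / α := by
        refine setIntegral_Ioi_div_rpow_le (half_pos hξ0) hα1 hcont (L := -2 * ω ξ)
          (fun η hη => ?_) (fun η hη => ?_) <;> rw [mem_Ioi] at hη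
        · have hincr := hmono (mem_Ici.2 (by linarith)) (mem_Ici.2 (by linarith))
            (by linarith : 2 * η - ξ ≤ 2 * η + ξ)
          linarith
        · have hsubadd := hconc.map_add_le hω0 (by linarith : 0 ≤ 2 * η - ξ)
            (by linarith : 0 ≤ 2 * ξ)
          rw [show 2 * η - ξ + 2 * ξ = 2 * η + ξ by ring] at hsubadd
          linarith [hdbl ξ hξ]
    _ = _ := by
        rw [Real.rpow_neg (half_pos hξ0).le, Real.div_rpow hξ0.le zero_le_two]
        field_simp

/-- If ω is a concave increasing modulus of continuity with ω(2ξ) ≤ (3/2)ω(ξ) for ξ ≥ δ,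
then for ξ ≥ δ and 0 < α < 2,
∫_{ξ/2}^∞ (ω(2η+ξ) − ω(2η−ξ) − 2ω(ξ))/η^{1+α} dη ≤ −(2^α/(2α)) ω(ξ)/ξ^α. -/
theorem stmt_13 (α δ : ℝ) (hα1 : 0 < α) (hα2 : α < 2) (hδ : 0 < δ)
    (ω : ℝ → ℝ) (hcont : Continuous ω) (hconc : ConcaveOn ℝ (Ici 0) ω)
    (hmono : MonotoneOn ω (Ici 0)) (hω0 : ω 0 = 0)
    (hdbl : ∀ ξ : ℝ, δ ≤ ξ → ω (2 * ξ) ≤ (3 / 2) * ω ξ) :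
    ∀ ξ : ℝ, δ ≤ ξ →
      (∫ η in Ioi (ξ / 2), (ω (2 * η + ξ) - ω (2 * η - ξ) - 2 * ω ξ) / η ^ (1 + α)) ≤
        -((2 : ℝ) ^ α / (2 * α)) * (ω ξ / ξ ^ α) :=
  stmt_13_general α δ hα1 hδ ω hconc hmono hω0 hdbl
end

section
/- Let ω be a modulus of continuity with ω(0) = 0, ω concave and increasing, and let θ : ℝⁿ → ℝ satisfy |θ(x) − θ(y)| ≤ ω(|x−y|) for all x,y, and let u : ℝⁿ → ℝⁿ satisfy |u(x) − u(y)| ≤ Ω(|x−y|). If θ(x) − θ(y) = ω(ξ) with |x−y| = ξ > 0, ω differentiable at ξ, and Ω continuous, then limsup_{h→0+} [θ(x + h u(x)) − θ(y + h u(y)) − ω(ξ)]/h ≤ Ω(ξ) ω'(ξ). -/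
/-!
Write `D(h) = θ(x + h u(x)) − θ(y + h u(y))`. Since θ is differentiable, `(D(h) − D(0))/h`
converges as `h → 0⁺`, and `D(0) = ω(ξ)`, so the limsup is a limit. On the other hand the modulus
of `u` gives `|x + h u(x) − (y + h u(y))| ≤ ξ + h Ω(ξ)`, so the modulus of θ bounds `D(h)` by
`ω(ξ + h Ω(ξ))`, whose difference quotient at `h = 0` tends to `ω'(ξ) Ω(ξ)`.
-/

open Filter Set Topology

section

variable {E : Type*} [NormedAddCommGroup E] [NormedSpace ℝ E]

lemma HasDerivAt.tendsto_div_comp_add_mul {f : ℝ → ℝ} {f' ξ : ℝ} (hf : HasDerivAt f f' ξ)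
    (c : ℝ) :
    Tendsto (fun h : ℝ => (f (ξ + h * c) - f ξ) / h) (𝓝[>] 0) (𝓝 (f' * c)) := by
  have hline : HasDerivAt (fun h : ℝ => ξ + h * c) c 0 := by
    simpa using ((hasDerivAt_id (0 : ℝ)).mul_const c).const_add ξ
  have hcomp : HasDerivAt (fun h => f (ξ + h * c)) (f' * c) 0 :=
    (by simpa using hf : HasDerivAt f f' (ξ + 0 * c)).comp 0 hline
  refine hcomp.tendsto_slope_zero_right.congr fun h => ?_
  simp [div_eq_inv_mul]

lemma DifferentiableAt.tendsto_div_sub_comp_add_smul {θ : E → ℝ} {x y v w : E}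
    (hx : DifferentiableAt ℝ θ x) (hy : DifferentiableAt ℝ θ y) :
    Tendsto (fun h : ℝ => (θ (x + h • v) - θ (y + h • w) - (θ x - θ y)) / h) (𝓝[>] 0)
      (𝓝 (fderiv ℝ θ x v - fderiv ℝ θ y w)) := by
  have hline : ∀ z v : E, HasDerivAt (fun h : ℝ => z + h • v) v 0 := fun z v => by
    simpa using ((hasDerivAt_id (0 : ℝ)).smul_const v).const_add z
  have hx' : HasFDerivAt θ (fderiv ℝ θ x) (x + (0 : ℝ) • v) := by simpa using hx.hasFDerivAt
  have hy' : HasFDerivAt θ (fderiv ℝ θ y) (y + (0 : ℝ) • w) := by simpa using hy.hasFDerivAt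
  have hD := (hx'.comp_hasDerivAt 0 (hline x v)).sub (hy'.comp_hasDerivAt 0 (hline y w))
  refine hD.tendsto_slope_zero_right.congr fun h => ?_
  simp [div_eq_inv_mul]

lemma norm_add_smul_sub_add_smul_le {u : E → E} {Ω : ℝ → ℝ}
    (hu : ∀ a b, ‖u a - u b‖ ≤ Ω ‖a - b‖) (x y : E) {h : ℝ} (hh : 0 ≤ h) :
    ‖(x + h • u x) - (y + h • u y)‖ ≤ ‖x - y‖ + h * Ω ‖x - y‖ :=
  calc ‖(x + h • u x) - (y + h • u y)‖ = ‖(x - y) + h • (u x - u y)‖ := by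
        rw [smul_sub, add_sub_add_comm]
    _ ≤ ‖x - y‖ + h * ‖u x - u y‖ := by
        simpa [norm_smul, abs_of_nonneg hh] using norm_add_le (x - y) (h • (u x - u y))
    _ ≤ ‖x - y‖ + h * Ω ‖x - y‖ := by gcongr; exact hu x y

end

theorem stmt_19_general (n : ℕ)
    (ω Ω : ℝ → ℝ)
    (hωmono : MonotoneOn ω (Ici 0))
    (θ : EuclideanSpace ℝ (Fin n) → ℝ)
    (u : EuclideanSpace ℝ (Fin n) → EuclideanSpace ℝ (Fin n))
    (hθ : ContDiff ℝ 1 θ)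
    (hθmod : ∀ a b, |θ a - θ b| ≤ ω ‖a - b‖)
    (humod : ∀ a b, ‖u a - u b‖ ≤ Ω ‖a - b‖)
    (x y : EuclideanSpace ℝ (Fin n)) (ξ ω'ξ : ℝ)
    (hxy : ‖x - y‖ = ξ) (hval : θ x - θ y = ω ξ)
    (hder : HasDerivAt ω ω'ξ ξ) :
    Filter.limsup (fun h : ℝ => (θ (x + h • u x) - θ (y + h • u y) - ω ξ) / h)
      (nhdsWithin 0 (Ioi 0)) ≤ Ω ξ * ω'ξ := by
  have hθdiff := hθ.differentiable one_ne_zero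
  have hlim := (hθdiff x).tendsto_div_sub_comp_add_smul (hθdiff y) (v := u x) (w := u y)
  rw [hval] at hlim
  rw [hlim.limsup_eq, mul_comm]
  refine le_of_tendsto_of_tendsto hlim (hder.tendsto_div_comp_add_mul (Ω ξ)) ?_
  filter_upwards [self_mem_nhdsWithin] with h (hh : 0 < h)
  have hΩξ : 0 ≤ Ω ξ := hxy ▸ (norm_nonneg _).trans (humod x y)
  have hdist := hxy ▸ norm_add_smul_sub_add_smul_le humod x y hh.le
  gcongr
  calc θ (x + h • u x) - θ (y + h • u y) ≤ ω ‖(x + h • u x) - (y + h • u y)‖ :=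
        (le_abs_self _).trans (hθmod _ _)
    _ ≤ ω (ξ + h * Ω ξ) :=
        hωmono (norm_nonneg _) (add_nonneg (hxy ▸ norm_nonneg _) (mul_nonneg hh.le hΩξ)) hdist

/-- If θ has modulus of continuity ω, u has modulus of continuity Ω, and
θ(x) − θ(y) = ω(ξ) with |x−y| = ξ > 0, ω differentiable at ξ, then
limsup_{h→0⁺} [θ(x + h u(x)) − θ(y + h u(y)) − ω(ξ)]/h ≤ Ω(ξ) ω'(ξ). -/
theorem stmt_19 (n : ℕ) (hn : 1 ≤ n)
    (ω Ω : ℝ → ℝ)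
    (hωconc : ConcaveOn ℝ (Ici 0) ω) (hωmono : MonotoneOn ω (Ici 0))
    (hωcont : ContinuousOn ω (Ici 0)) (hω0 : ω 0 = 0)
    (hΩconc : ConcaveOn ℝ (Ici 0) Ω) (hΩmono : MonotoneOn Ω (Ici 0))
    (hΩcont : Continuous Ω) (hΩ0 : Ω 0 = 0)
    (θ : EuclideanSpace ℝ (Fin n) → ℝ)
    (u : EuclideanSpace ℝ (Fin n) → EuclideanSpace ℝ (Fin n))
    (hθ : ContDiff ℝ 1 θ)
    (hθmod : ∀ a b, |θ a - θ b| ≤ ω ‖a - b‖)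
    (humod : ∀ a b, ‖u a - u b‖ ≤ Ω ‖a - b‖)
    (x y : EuclideanSpace ℝ (Fin n)) (ξ ω'ξ : ℝ)
    (hξ : 0 < ξ) (hxy : ‖x - y‖ = ξ) (hval : θ x - θ y = ω ξ)
    (hder : HasDerivAt ω ω'ξ ξ) :
    Filter.limsup (fun h : ℝ => (θ (x + h • u x) - θ (y + h • u y) - ω ξ) / h)
      (nhdsWithin 0 (Ioi 0)) ≤ Ω ξ * ω'ξ :=
  stmt_19_general n ω Ω hωmono θ u hθ hθmod humod x y ξ ω'ξ hxy hval hder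
end
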